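/- With a = 1/3, b = 2/3 (i.e. k = 0) and F₀(η) = A + Bη + Ce^{-η}, the one-step VIM iterate F₁(η) = F₀(η) - (1/2)∫₀^η(τ-η)²[F₀''' - (1/3)(F₀')² + (2/3)F₀F₀'']dτ is given explicitly by F₁(η) = Bη + A + C - C²/24 - Cη + (η²C)/2 + (2/3)ηe^{-η}CB - (1/12)η²C² - (2/3)CA - (8/3)BC + (1/12)ηC² + (1/18)B²η³ + (1/24)C²e^{-2η} + (8/3)BCe^{-η} + (2/3)CAe^{-η} + (2/3)CAη + 2CBη - (2/3)BCη² - (1/3)CAη². -/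

import Mathlib

/-!
For `F₀ = A + Bη + Ce^{-η}` one has `F₀' = B - Ce^{-η}`, `F₀'' = Ce^{-η}`, `F₀''' = -Ce^{-η}`, so the
residual of the momentum equation is `-B²/3 + (p + qτ)e^{-τ} + (C²/3)e^{-2τ}` with
`p = C(2A/3 + 2B/3 - 1)`, `q = 2BC/3`. Against the kernel `(τ - η)²` each of these terms has an
elementary primitive (repeated integration by parts), so the correction integral is evaluated by
the fundamental theorem of calculus.
-/

open Real

noncomputable def marangoniResidual (F : ℝ → ℝ) (τ : ℝ) : ℝ :=
  deriv (deriv (deriv F)) τ - (1/3) * (deriv F τ)^2 + (2/3) * F τ * deriv (deriv F) τ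

theorem hasDerivAt_exp_neg (x : ℝ) : HasDerivAt (fun x => exp (-x)) (-exp (-x)) x := by
  simpa using (hasDerivAt_neg x).exp

theorem marangoniResidual_affine_add_exp_neg (A B C τ : ℝ) :
    marangoniResidual (fun x => A + B * x + C * exp (-x)) τ =
      -(B^2/3) + (C * (2*A/3 + 2*B/3 - 1) + 2*B*C/3 * τ) * exp (-τ) + C^2/3 * exp (-τ)^2 := by
  have d1 : deriv (fun x => A + B * x + C * exp (-x)) = fun x => B - C * exp (-x) :=
    funext fun x =>
      ((((hasDerivAt_id x).const_mul B).const_add A).fun_add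
        ((hasDerivAt_exp_neg x).const_mul C)).deriv.trans (by ring)
  have d2 : deriv (fun x => B - C * exp (-x)) = fun x => C * exp (-x) := funext fun x =>
    ((hasDerivAt_exp_neg x).const_mul C).const_sub B |>.deriv.trans (by ring)
  have d3 : deriv (fun x => C * exp (-x)) τ = -(C * exp (-τ)) :=
    ((hasDerivAt_exp_neg τ).const_mul C).deriv.trans (by ring)
  simp only [marangoniResidual, d1, d2, d3]
  ring

theorem hasDerivAt_primitive_sq_sub_mul_linear_mul_exp_neg (p q η τ : ℝ) :
    HasDerivAt
      (fun τ => -exp (-τ) * ((p + q*τ) * ((τ-η)^2 + 2*(τ-η) + 2) + q * ((τ-η)^2 + 4*(τ-η) + 6)))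
      ((τ-η)^2 * ((p + q*τ) * exp (-τ))) τ := by
  have hu : HasDerivAt (fun τ => τ - η) 1 τ := (hasDerivAt_id τ).sub_const η
  have hlin : HasDerivAt (fun τ => p + q*τ) q τ := by
    simpa using ((hasDerivAt_id τ).const_mul q).const_add p
  refine ((hasDerivAt_exp_neg τ).fun_neg.fun_mul
    ((hlin.fun_mul (((hu.fun_pow 2).fun_add (hu.const_mul 2)).add_const 2)).fun_add
      ((((hu.fun_pow 2).fun_add (hu.const_mul 4)).add_const 6).const_mul q))).congr_deriv ?_
  push_cast
  ring

theorem hasDerivAt_primitive_sq_sub_mul_exp_neg_sq (η τ : ℝ) :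
    HasDerivAt (fun τ => -exp (-τ)^2 * ((τ-η)^2/2 + (τ-η)/2 + 1/4))
      ((τ-η)^2 * exp (-τ)^2) τ := by
  have hu : HasDerivAt (fun τ => τ - η) 1 τ := (hasDerivAt_id τ).sub_const η
  refine (((hasDerivAt_exp_neg τ).fun_pow 2).fun_neg.fun_mul
    ((((hu.fun_pow 2).div_const 2).fun_add (hu.div_const 2)).add_const (1/4))).congr_deriv ?_
  push_cast
  ring

theorem integral_sq_sub_mul_exp_neg_poly (s p q r η : ℝ) :
    ∫ τ in (0:ℝ)..η, (τ-η)^2 * (s + (p + q*τ) * exp (-τ) + r * exp (-τ)^2) =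
      s * η^3/3 + p * (η^2 - 2*η + 2) + q * (η^2 - 4*η + 6) + r * (η^2/2 - η/2 + 1/4)
        - (2*p + 2*q*η + 6*q) * exp (-η) - r/4 * exp (-η)^2 := by
  have hcube : ∀ τ, HasDerivAt (fun τ => (τ-η)^3/3) ((τ-η)^2) τ := fun τ => by
    simpa using (((hasDerivAt_id τ).sub_const η).pow 3).div_const 3
  have hprim : ∀ τ, HasDerivAt
      (fun τ => s * ((τ-η)^3/3)
        + -exp (-τ) * ((p + q*τ) * ((τ-η)^2 + 2*(τ-η) + 2) + q * ((τ-η)^2 + 4*(τ-η) + 6))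
        + r * (-exp (-τ)^2 * ((τ-η)^2/2 + (τ-η)/2 + 1/4)))
      ((τ-η)^2 * (s + (p + q*τ) * exp (-τ) + r * exp (-τ)^2)) τ := fun τ => by
    refine ((((hcube τ).const_mul s).fun_add
      (hasDerivAt_primitive_sq_sub_mul_linear_mul_exp_neg p q η τ)).fun_add
      ((hasDerivAt_primitive_sq_sub_mul_exp_neg_sq η τ).const_mul r)).congr_deriv ?_
    ring
  rw [intervalIntegral.integral_eq_sub_of_hasDerivAt (fun τ _ => hprim τ)
    (Continuous.intervalIntegrable (by fun_prop) _ _)]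
  simp only [neg_zero, exp_zero]
  ring

theorem stmt_8 (A B C : ℝ) (F₀ F₁ : ℝ → ℝ)
    (hF₀ : ∀ η, F₀ η = A + B * η + C * Real.exp (-η))
    (hF₁ : ∀ η, F₁ η = F₀ η - (1/2) * ∫ τ in (0:ℝ)..η, (τ - η)^2 *
      (deriv (deriv (deriv F₀)) τ - (1/3) * (deriv F₀ τ)^2 + (2/3) * F₀ τ * deriv (deriv F₀) τ)) :
    ∀ η, F₁ η = B * η + A + C - C^2/24 - C * η + η^2 * C / 2
      + (2/3) * η * Real.exp (-η) * C * B - (1/12) * η^2 * C^2 - (2/3) * C * A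
      - (8/3) * B * C + (1/12) * η * C^2 + (1/18) * B^2 * η^3
      + (1/24) * C^2 * Real.exp (-2*η) + (8/3) * B * C * Real.exp (-η)
      + (2/3) * C * A * Real.exp (-η) + (2/3) * C * A * η + 2 * C * B * η
      - (2/3) * B * C * η^2 - (1/3) * C * A * η^2 := by
  obtain rfl : F₀ = fun x => A + B * x + C * exp (-x) := funext hF₀
  have hres := marangoniResidual_affine_add_exp_neg A B C
  simp only [marangoniResidual] at hres
  intro η
  have hexp : exp (-2*η) = exp (-η)^2 := by rw [sq, ← exp_add]; congr 1; ring
  rw [hF₁, hexp]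
  simp only [hres, integral_sq_sub_mul_exp_neg_poly]
  ring
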